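/- arXiv:1005.1156 — 3 statements merged into one kernel-verified Lean document; each statement's English description precedes it below -/
import Mathlib

section
/- Let r ≥ 1 be an integer. For each 1 ≤ i ≤ r let e_i be a positive integer, h_i an integer with gcd(h_i, e_i) = 1, and let u_i and w_i be integers. Then there exists exactly one tuple of integers (j_1, …, j_r) with 0 ≤ j_i < e_i for all i, such that the rational number Σ_{i=1}^r [ (u_i + j_i·w_i)/(e_1⋯e_{i−1}) + j_i·h_i/(e_1⋯e_i) ] is congruent to 1/(e_1⋯e_r) modulo ℤ (i.e. their difference is an integer). -/
/-!
Multiplying by `E = e₁⋯e_r` turns the condition into the congruence `∑ cᵢ Eᵢ ≡ 1 (mod E)`,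
where `Eᵢ = e_{i+1}⋯e_r` and `cᵢ = (uᵢ + jᵢwᵢ)eᵢ + jᵢhᵢ ≡ jᵢhᵢ (mod eᵢ)` is the `i`-th digit of a
number written in the mixed radix `(e₁, …, e_r)`. Modulo `E = e₁ · E₁` this congruence splits into
the same kind of congruence modulo `E₁` for the digits `c₂, …, c_r`, and a congruence
`j₁h₁ ≡ b (mod e₁)` whose right-hand side depends only on `j₂, …, j_r`. Since `h₁` is invertible
modulo `e₁`, the latter has exactly one solution in `[0, e₁)`, and induction on `r` finishes the
proof.
-/

open Finset

theorem Fin.existsUnique_cons {α : Type*} {n : ℕ} {P : (Fin (n + 1) → α) → Prop}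
    {Q : (Fin n → α) → Prop} {R : α → (Fin n → α) → Prop}
    (hP : ∀ x t, P (Fin.cons x t) ↔ Q t ∧ R x t) (hQ : ∃! t, Q t)
    (hR : ∀ t, Q t → ∃! x, R x t) : ∃! j, P j := by
  obtain ⟨t, ht, ht_unique⟩ := hQ
  obtain ⟨x, hx, hx_unique⟩ := hR t ht
  refine ⟨Fin.cons x t, (hP x t).2 ⟨ht, hx⟩, fun j hj => ?_⟩
  rw [← Fin.cons_self_tail j] at hj ⊢
  obtain ⟨hj_tail, hj_head⟩ := (hP _ _).1 hj
  obtain rfl := ht_unique _ hj_tail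
  rw [hx_unique _ hj_head]

theorem Finset.prod_Iio_mul_mul_prod_Ioi {α M : Type*} [LinearOrder α] [Fintype α]
    [LocallyFiniteOrderTop α] [LocallyFiniteOrderBot α] [CommMonoid M] (f : α → M) (a : α) :
    (∏ x ∈ Iio a, f x) * f a * ∏ x ∈ Ioi a, f x = ∏ x, f x := by
  classical
  rw [← prod_mul_prod_compl {a}, ← Ioi_disjUnion_Iio, prod_disjUnion, prod_singleton,
    mul_comm _ (f a), mul_assoc, mul_comm (∏ x ∈ Ioi a, f x)]

theorem Finset.sum_div_prod_Iio_mul {α K : Type*} [LinearOrder α] [Fintype α]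
    [LocallyFiniteOrderTop α] [LocallyFiniteOrderBot α] [Field K] (c e : α → K)
    (he : ∀ i, e i ≠ 0) :
    ∑ i, c i / ((∏ k ∈ Iio i, e k) * e i) = (∑ i, c i * ∏ k ∈ Ioi i, e k) / ∏ i, e i := by
  rw [sum_div]
  refine sum_congr rfl fun i _ => ?_
  rw [← prod_Iio_mul_mul_prod_Ioi e i,
    mul_div_mul_right _ _ (prod_ne_zero_iff.mpr fun k _ => he k)]

theorem Int.exists_cast_eq_div_iff_dvd {K : Type*} [Field K] [CharZero K] {m n : ℤ}
    (hn : n ≠ 0) : (∃ z : ℤ, (m : K) / n = z) ↔ n ∣ m := by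
  have hn' : (n : K) ≠ 0 := Int.cast_ne_zero.mpr hn
  constructor
  · rintro ⟨z, hz⟩
    rw [div_eq_iff hn'] at hz
    exact ⟨z, by rw [mul_comm]; exact_mod_cast hz⟩
  · rintro ⟨z, rfl⟩
    exact ⟨z, by push_cast; field_simp⟩

namespace Int

theorem existsUnique_mul_modEq {e h : ℤ} (he : 0 < e) (hc : IsCoprime h e) (b : ℤ) :
    ∃! x, (0 ≤ x ∧ x < e) ∧ x * h ≡ b [ZMOD e] := by
  obtain ⟨c, d, hcd⟩ := hc
  refine ⟨c * b % e, ⟨⟨emod_nonneg _ he.ne', emod_lt_of_pos _ he⟩, ?_⟩, ?_⟩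
  · calc c * b % e * h ≡ c * b * h [ZMOD e] := (mod_modEq _ _).mul_right _
      _ = b - e * (d * b) := by linear_combination b * hcd
      _ ≡ b [ZMOD e] := sub_modulus_mul_modEq_iff.mpr rfl
  · rintro y ⟨⟨hy0, hye⟩, hy⟩
    have hyc : y ≡ c * b [ZMOD e] :=
      calc y = c * (y * h) + e * (d * y) := by linear_combination -y * hcd
        _ ≡ c * b [ZMOD e] := add_modulus_mul_modEq_iff.mpr (hy.mul_left c)
    exact (emod_eq_of_lt hy0 hye).symm.trans hyc

theorem add_mul_modEq_mul_iff {n b : ℤ} (hb : b ≠ 0) (c s a : ℤ) :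
    c * b + s ≡ a [ZMOD n * b] ↔ s ≡ a [ZMOD b] ∧ c ≡ (a - s) / b [ZMOD n] := by
  simp only [modEq_iff_dvd]
  have hsplit : a - (c * b + s) = (a - s) - c * b := by ring
  rw [hsplit]
  constructor
  · intro hdvd
    obtain ⟨m, hm⟩ : b ∣ a - s :=
      (dvd_sub_left (dvd_mul_left b c)).mp ((dvd_mul_left b n).trans hdvd)
    rw [hm, mul_comm b m, ← sub_mul, mul_dvd_mul_iff_right hb] at hdvd
    exact ⟨⟨m, hm⟩, by rwa [hm, Int.mul_ediv_cancel_left m hb]⟩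
  · rintro ⟨⟨m, hm⟩, hn⟩
    rw [hm, Int.mul_ediv_cancel_left m hb] at hn
    rw [hm, mul_comm b m, ← sub_mul]
    exact mul_dvd_mul_right hn b

theorem existsUnique_sum_mul_prod_Ioi_modEq :
    ∀ {r : ℕ} (e : Fin r → ℤ) (d : Fin r → ℤ → ℤ),
      (∀ i b, ∃! x, (0 ≤ x ∧ x < e i) ∧ d i x ≡ b [ZMOD e i]) → ∀ a : ℤ,
      ∃! j : Fin r → ℤ, (∀ i, 0 ≤ j i ∧ j i < e i) ∧
        ∑ i, d i (j i) * ∏ k ∈ Ioi i, e k ≡ a [ZMOD ∏ i, e i]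
  | 0, _, _, _, _ => ⟨Fin.elim0, by simp [modEq_one], fun _ _ => Subsingleton.elim _ _⟩
  | r + 1, e, d, hd, a => by
    have hE : ∏ i : Fin r, e i.succ ≠ 0 := prod_ne_zero_iff.mpr fun i _ => by
      obtain ⟨x, ⟨hx0, hxe⟩, _⟩ := (hd i.succ 0).exists
      omega
    refine Fin.existsUnique_cons (fun x t => ?_)
      (existsUnique_sum_mul_prod_Ioi_modEq (fun i => e i.succ) (fun i => d i.succ)
        (fun i => hd i.succ) a)
      (fun t _ => hd 0 ((a - ∑ i, d i.succ (t i) * ∏ k ∈ Ioi i, e k.succ) / ∏ i : Fin r, e i.succ))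
    simp only [Fin.forall_fin_succ, Fin.cons_zero, Fin.cons_succ, Fin.sum_univ_succ,
      Fin.prod_Ioi_zero, Fin.prod_Ioi_succ, Fin.prod_univ_succ, add_mul_modEq_mul_iff hE]
    tauto

end Int

theorem stmt0_general (r : ℕ) (e : Fin r → ℤ) (he : ∀ i, 0 < e i)
    (h : Fin r → ℤ) (hcop : ∀ i, Int.gcd (h i) (e i) = 1) (u w : Fin r → ℤ) :
    ∃! j : Fin r → ℤ,
      (∀ i, 0 ≤ j i ∧ j i < e i) ∧
      ∃ z : ℤ,
        (∑ i : Fin r,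
            (((u i + j i * w i : ℤ) : ℚ) / (∏ k ∈ Finset.Iio i, ((e k : ℤ) : ℚ)) +
              ((j i * h i : ℤ) : ℚ) /
                ((∏ k ∈ Finset.Iio i, ((e k : ℤ) : ℚ)) * ((e i : ℤ) : ℚ)))) -
          1 / (∏ i : Fin r, ((e i : ℤ) : ℚ)) = (z : ℚ) := by
  set d : Fin r → ℤ → ℤ := fun i x => (u i + x * w i) * e i + x * h i
  have hdigit (i : Fin r) (b : ℤ) : ∃! x, (0 ≤ x ∧ x < e i) ∧ d i x ≡ b [ZMOD e i] := by
    simpa only [d, Int.mul_modulus_add_modEq_iff] using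
      Int.existsUnique_mul_modEq (he i) (Int.isCoprime_iff_gcd_eq_one.mpr (hcop i)) b
  refine (existsUnique_congr fun j => and_congr_right fun _ => ?_).mpr
    (Int.existsUnique_sum_mul_prod_Ioi_modEq e d hdigit 1)
  have he' (i : Fin r) : ((e i : ℤ) : ℚ) ≠ 0 := Int.cast_ne_zero.mpr (he i).ne'
  have hterm (i : Fin r) :
      ((u i + j i * w i : ℤ) : ℚ) / (∏ k ∈ Iio i, ((e k : ℤ) : ℚ)) +
          ((j i * h i : ℤ) : ℚ) / ((∏ k ∈ Iio i, ((e k : ℤ) : ℚ)) * e i) =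
        (d i (j i) : ℚ) / ((∏ k ∈ Iio i, ((e k : ℤ) : ℚ)) * e i) := by
    simp only [d, Int.cast_add (_ * e i), Int.cast_mul _ (e i), add_div,
      mul_div_mul_right _ _ (he' i)]
  have hE : ∏ i, e i ≠ 0 := prod_ne_zero_iff.mpr fun i _ => (he i).ne'
  rw [sum_congr rfl fun i _ => hterm i, sum_div_prod_Iio_mul _ _ he', div_sub_div_same,
    Int.modEq_comm, Int.modEq_iff_dvd, ← Int.exists_cast_eq_div_iff_dvd (K := ℚ) hE]
  push_cast
  rfl

/-- Uniqueness and existence of the tuple of exponents `(j_1, …, j_r)` with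
`0 ≤ j_i < e_i` such that
`Σ_i [ (u_i + j_i·w_i)/(e_1⋯e_{i−1}) + j_i·h_i/(e_1⋯e_i) ] ≡ 1/(e_1⋯e_r) (mod ℤ)`. -/
theorem stmt0 (r : ℕ) (hr : 1 ≤ r) (e : Fin r → ℤ) (he : ∀ i, 0 < e i)
    (h : Fin r → ℤ) (hcop : ∀ i, Int.gcd (h i) (e i) = 1) (u w : Fin r → ℤ) :
    ∃! j : Fin r → ℤ,
      (∀ i, 0 ≤ j i ∧ j i < e i) ∧
      ∃ z : ℤ,
        (∑ i : Fin r,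
            (((u i + j i * w i : ℤ) : ℚ) / (∏ k ∈ Finset.Iio i, ((e k : ℤ) : ℚ)) +
              ((j i * h i : ℤ) : ℚ) /
                ((∏ k ∈ Finset.Iio i, ((e k : ℤ) : ℚ)) * ((e i : ℤ) : ℚ)))) -
          1 / (∏ i : Fin r, ((e i : ℤ) : ℚ)) = (z : ℚ) :=
  stmt0_general r e he h hcop u w
end

section
/- Let K be a number field with ring of integers ℤ_K, let p be a prime number, and let 𝔞 be a nonzero fractional ideal of K such that v_𝔮(𝔞) = 0 for every prime ideal 𝔮 of ℤ_K not lying over p. Set H := ⌈ max_{𝔭 | p} v_𝔭(𝔞)/e(𝔭/p) ⌉. Let α ∈ K^* be an element with v_𝔭(α) = v_𝔭(𝔞) for every prime ideal 𝔭 lying over p and v_𝔮(α) ≥ 0 for every prime ideal 𝔮 not lying over p. Then 𝔞 is the fractional ideal generated by p^H and α, i.e. 𝔞 = p^H·ℤ_K + α·ℤ_K. -/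
open IsDedekindDomain NumberField

/-- The additive `v`-adic valuation of a nonzero element `x` of the fraction field `K`
(the exponent of `v` in the factorization of the principal fractional ideal `xR`),
with junk value `0` at `x = 0`. -/
noncomputable def addVal {R : Type*} [CommRing R] [IsDedekindDomain R]
    {K : Type*} [Field K] [Algebra R K] [IsFractionRing R K]
    (v : HeightOneSpectrum R) (x : K) : ℤ :=
  if h : v.valuation K x = 0 then 0 else - Multiplicative.toAdd (WithZero.unzero h)

/-!
Two nonzero fractional ideals agree once their valuations agree at every prime, and the valuation
of `I + J` at `𝔮` is `min (v_𝔮 I) (v_𝔮 J)`. For `𝔭 ∣ p` we have `v_𝔭(α) = v_𝔭(𝔞) ≤ H e(𝔭/p) = v_𝔭(p^H)`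
by the choice of `H`; for `𝔮 ∤ p` we have `v_𝔮(p^H) = 0 = v_𝔮(𝔞) ≤ v_𝔮(α)`. In both cases the
minimum is `v_𝔮(𝔞)`.
-/

open scoped nonZeroDivisors
open IsDedekindDomain.HeightOneSpectrum FractionalIdeal WithZero

section addVal

variable {R : Type*} [CommRing R] [IsDedekindDomain R]
    {K : Type*} [Field K] [Algebra R K] [IsFractionRing R K] (v : HeightOneSpectrum R)

lemma addVal_eq_neg_log (x : K) : addVal v x = -log (v.valuation K x) := by
  unfold addVal
  split_ifs with h
  · rw [h, log_zero, neg_zero]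
  · rw [toAdd_unzero_eq_log]

lemma addVal_zpow (x : K) (n : ℤ) : addVal v (x ^ n) = n * addVal v x := by
  rw [addVal_eq_neg_log, addVal_eq_neg_log, map_zpow₀, log_zpow, smul_eq_mul, mul_neg]

lemma addVal_algebraMap_nonneg (r : R) : 0 ≤ addVal v (algebraMap R K r) := by
  rw [addVal_eq_neg_log, neg_nonneg]
  rcases eq_or_ne r 0 with rfl | hr
  · simp
  · rw [log_le_iff_le_exp (by simpa using hr), exp_zero]
    exact v.valuation_le_one r

lemma addVal_algebraMap_pos_iff {r : R} (hr : r ≠ 0) :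
    0 < addVal v (algebraMap R K r) ↔ r ∈ v.asIdeal := by
  rw [addVal_eq_neg_log, neg_pos, log_lt_iff_lt_exp (by simpa using hr), exp_zero,
    v.valuation_lt_one_iff_mem]

lemma addVal_eq_count (x : K) : addVal v x = count K v (spanSingleton R⁰ x) := by
  rcases eq_or_ne x 0 with rfl | hx
  · simp [addVal, count_zero]
  obtain ⟨⟨n, d⟩, rfl⟩ := IsLocalization.mk'_surjective R⁰ x
  have hn : n ≠ 0 := by rintro rfl; simp at hx
  have hspan : spanSingleton R⁰ (IsLocalization.mk' K n d) =
      spanSingleton R⁰ (algebraMap R K d)⁻¹ * ↑(Ideal.span {n}) := by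
    rw [coeIdeal_span_singleton, spanSingleton_mul_spanSingleton, IsFractionRing.mk'_eq_div,
      div_eq_mul_inv, mul_comm]
  rw [count_well_defined K v (spanSingleton_ne_zero_iff.mpr hx) hspan, addVal_eq_neg_log,
    valuation_of_mk', intValuation_if_neg v hn,
    intValuation_if_neg v (nonZeroDivisors.coe_ne_zero d), log_div exp_ne_zero exp_ne_zero,
    log_exp, log_exp]
  ring

end addVal

namespace FractionalIdeal

variable {R : Type*} [CommRing R] [IsDedekindDomain R]
    {K : Type*} [Field K] [Algebra R K] [IsFractionRing R K]

lemma le_one_of_count_nonneg {I : FractionalIdeal R⁰ K} (hI : I ≠ 0)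
    (h : ∀ v : HeightOneSpectrum R, 0 ≤ count K v I) : I ≤ 1 := by
  rw [← finprod_heightOneSpectrum_factorization' K hI]
  refine finprod_induction (· ≤ 1) le_rfl (fun a b ha hb => mul_le_one' ha hb) fun v => ?_
  lift count K v I to ℕ using h v with n
  rw [zpow_natCast, ← coeIdeal_pow]
  exact coeIdeal_le_one

lemma le_of_count_le {I J : FractionalIdeal R⁰ K} (hI : I ≠ 0) (hJ : J ≠ 0)
    (h : ∀ v : HeightOneSpectrum R, count K v J ≤ count K v I) : I ≤ J := by
  have hJI : J⁻¹ * I ≤ 1 := le_one_of_count_nonneg (mul_ne_zero (inv_ne_zero hJ) hI) fun v => by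
    rw [count_mul K v (inv_ne_zero hJ) hI, count_inv]
    linarith [h v]
  calc I = J * (J⁻¹ * I) := (mul_inv_cancel_left₀ hJ I).symm
    _ ≤ J * 1 := mul_le_mul_right hJI J
    _ = J := mul_one J

lemma eq_add_of_count_eq_min {I J₁ J₂ : FractionalIdeal R⁰ K} (hI : I ≠ 0) (hJ₁ : J₁ ≠ 0)
    (hJ₂ : J₂ ≠ 0) (h : ∀ v : HeightOneSpectrum R, count K v I = min (count K v J₁) (count K v J₂)) :
    I = J₁ + J₂ := by
  rw [← sup_eq_add]
  have hJ : J₁ ⊔ J₂ ≠ 0 := fun h0 => hJ₁ (le_zero_iff.mp (h0 ▸ le_sup_left))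
  refine le_antisymm (le_of_count_le hI hJ fun v => ?_) (sup_le ?_ ?_)
  · exact h v ▸ le_min (count_mono K v hJ₁ le_sup_left) (count_mono K v hJ₂ le_sup_right)
  · exact le_of_count_le hJ₁ hI fun v => h v ▸ min_le_left _ _
  · exact le_of_count_le hJ₂ hI fun v => h v ▸ min_le_right _ _

end FractionalIdeal

/-- two-element representation `𝔞 = p^H·ℤ_K + α·ℤ_K` of a nonzero fractional
ideal `𝔞` supported at the primes over `p`, where `H = ⌈max_{𝔭|p} v_𝔭(𝔞)/e(𝔭/p)⌉` and
`α ∈ K^*` satisfies `v_𝔭(α) = v_𝔭(𝔞)` for `𝔭 | p` and `v_𝔮(α) ≥ 0` for `𝔮 ∤ p`. -/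
theorem stmt5 (K : Type*) [Field K] [NumberField K] (p : ℕ) (hp : p.Prime)
    (𝔞 : FractionalIdeal (nonZeroDivisors (𝓞 K)) K) (h𝔞 : 𝔞 ≠ 0)
    (hsupp : ∀ Q : HeightOneSpectrum (𝓞 K), (p : 𝓞 K) ∉ Q.asIdeal →
      FractionalIdeal.count K Q 𝔞 = 0)
    (S : Finset (HeightOneSpectrum (𝓞 K)))
    (hS : ∀ Q : HeightOneSpectrum (𝓞 K), Q ∈ S ↔ (p : 𝓞 K) ∈ Q.asIdeal)
    (hSne : S.Nonempty)
    (H : ℤ)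
    (hH : H = ⌈S.sup' hSne fun Q =>
      (FractionalIdeal.count K Q 𝔞 : ℚ) / (addVal Q ((p : K)) : ℚ)⌉)
    (α : K) (hα : α ≠ 0)
    (hvα : ∀ Q : HeightOneSpectrum (𝓞 K), (p : 𝓞 K) ∈ Q.asIdeal →
      addVal Q α = FractionalIdeal.count K Q 𝔞)
    (hvα' : ∀ Q : HeightOneSpectrum (𝓞 K), (p : 𝓞 K) ∉ Q.asIdeal → 0 ≤ addVal Q α) :
    𝔞 = FractionalIdeal.spanSingleton (nonZeroDivisors (𝓞 K)) ((p : K) ^ H) +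
      FractionalIdeal.spanSingleton (nonZeroDivisors (𝓞 K)) α := by
  have hp0 : (p : 𝓞 K) ≠ 0 := Nat.cast_ne_zero.mpr hp.ne_zero
  have hpK : (p : K) = algebraMap (𝓞 K) K p := (map_natCast _ p).symm
  refine eq_add_of_count_eq_min h𝔞
    (spanSingleton_ne_zero_iff.mpr (zpow_ne_zero H (Nat.cast_ne_zero.mpr hp.ne_zero)))
    (spanSingleton_ne_zero_iff.mpr hα) fun Q => ?_
  rw [← addVal_eq_count, ← addVal_eq_count, addVal_zpow]
  have he_nonneg : 0 ≤ addVal Q (p : K) := hpK ▸ addVal_algebraMap_nonneg Q _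
  have he_pos : 0 < addVal Q (p : K) ↔ (p : 𝓞 K) ∈ Q.asIdeal :=
    hpK ▸ addVal_algebraMap_pos_iff Q hp0
  by_cases hQ : (p : 𝓞 K) ∈ Q.asIdeal
  · have hle : (count K Q 𝔞 : ℚ) / addVal Q (p : K) ≤ H :=
      hH ▸ (S.le_sup' (fun Q => (count K Q 𝔞 : ℚ) / addVal Q (p : K)) ((hS Q).mpr hQ)).trans
        (Int.le_ceil _)
    have hle' : count K Q 𝔞 ≤ H * addVal Q (p : K) := by
      exact_mod_cast (div_le_iff₀ (by exact_mod_cast he_pos.mpr hQ)).mp hle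
    rw [hvα Q hQ, min_eq_right hle']
  · have he : addVal Q (p : K) = 0 := le_antisymm (not_lt.mp (mt he_pos.mp hQ)) he_nonneg
    rw [hsupp Q hQ, he, mul_zero, min_eq_left (hvα' Q hQ)]
end

section
/- Let p be a prime number, L a finite extension of ℚ_p of degree n, O_L the integral closure of ℤ_p in L, and θ ∈ O_L with L = ℚ_p(θ). Suppose g_0 = 1, g_1, …, g_{n−1} ∈ ℤ_p[x] are monic polynomials with deg g_m = m for all 0 ≤ m < n, and 0 = ν_0 ≤ ν_1 ≤ ⋯ ≤ ν_{n−1} are integers such that the family (g_m(θ)/p^{ν_m})_{0 ≤ m < n} is a ℤ_p-basis of O_L. Then ν_{n−1} is the least nonnegative integer N such that p^N·O_L ⊆ ℤ_p[θ]. -/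
/-!
Since `g_m` is monic of degree `m`, the values `g_m(θ)` for `m < n` span the same ℤ_p-module as
`1, θ, …, θ^{n-1}`, and this is `ℤ_p[θ]` because the minimal polynomial of `θ` over ℤ_p is monic
of degree `n`. Hence `ℤ_p[θ]` is spanned by the multiples `p^{ν_m} b_m` of the basis `(b_m)` of
`O_L`, so `p^N O_L ⊆ ℤ_p[θ]` exactly when `p^{ν_m} ∣ p^N` for every `m`, that is, when
`ν_{n-1} ≤ N`.
-/

open Polynomial Submodule Set

section Triangular

variable {R A : Type*} [CommRing R] [Ring A] [Algebra R A]

theorem aeval_mem_span_pow_of_aeval_eq_zero [Nontrivial A] {x : A} {μ : R[X]} (hμ : μ.Monic)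
    (hx : aeval x μ = 0) (q : R[X]) :
    aeval x q ∈ span R (range fun i : Fin μ.natDegree => x ^ (i : ℕ)) := by
  have hμ1 : μ ≠ 1 := by
    rintro rfl
    simp at hx
  rw [← aeval_modByMonic_eq_self_of_root hx,
    aeval_eq_sum_range' (natDegree_modByMonic_lt q hμ hμ1)]
  exact sum_mem fun i hi => smul_mem _ _ (subset_span ⟨⟨i, Finset.mem_range.mp hi⟩, rfl⟩)

theorem pow_mem_span_aeval_of_monic_of_natDegree_eq {x : A} {n : ℕ} {g : ℕ → R[X]}
    (hmonic : ∀ m < n, (g m).Monic) (hdeg : ∀ m < n, (g m).natDegree = m) {i : ℕ} (hi : i < n) :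
    x ^ i ∈ span R (range fun m : Fin n => aeval x (g m)) := by
  induction i using Nat.strong_induction_on with
  | _ i ih =>
    have hlead : (g i).coeff i = 1 := by
      simpa only [hdeg i hi] using (hmonic i hi).coeff_natDegree
    have hpow : x ^ i = aeval x (g i) - ∑ j ∈ Finset.range i, (g i).coeff j • x ^ j := by
      rw [aeval_eq_sum_range, hdeg i hi, Finset.sum_range_succ, hlead, one_smul,
        add_sub_cancel_left]
    rw [hpow]
    refine sub_mem (subset_span ⟨⟨i, hi⟩, rfl⟩) (sum_mem fun j hj => smul_mem _ _ ?_)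
    have hji := Finset.mem_range.mp hj
    exact ih j hji (hji.trans hi)

theorem toSubmodule_adjoin_singleton_le_span_aeval [Nontrivial A] {x : A} {μ : R[X]} {n : ℕ}
    (hμ : μ.Monic) (hx : aeval x μ = 0) (hμn : μ.natDegree = n) {g : ℕ → R[X]}
    (hmonic : ∀ m < n, (g m).Monic) (hdeg : ∀ m < n, (g m).natDegree = m) :
    Subalgebra.toSubmodule (Algebra.adjoin R {x}) ≤
      span R (range fun m : Fin n => aeval x (g m)) := by
  intro y hy
  rw [Subalgebra.mem_toSubmodule, Algebra.adjoin_singleton_eq_range_aeval] at hy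
  obtain ⟨q, rfl⟩ := hy
  refine span_le.mpr ?_ (aeval_mem_span_pow_of_aeval_eq_zero hμ hx q)
  rintro _ ⟨i, rfl⟩
  exact pow_mem_span_aeval_of_monic_of_natDegree_eq hmonic hdeg (hμn ▸ i.2)

end Triangular

theorem natDegree_minpoly_eq_finrank_of_adjoin_eq_top {R K L : Type*} [CommRing R] [IsDomain R]
    [IsIntegrallyClosed R] [Field K] [Algebra R K] [IsFractionRing R K] [Field L] [Algebra R L]
    [Algebra K L] [IsScalarTower R K L] {x : L} (hx : IsIntegral R x)
    (htop : Algebra.adjoin K {x} = ⊤) :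
    (minpoly R x).natDegree = Module.finrank K L := by
  rw [← (minpoly.monic hx).natDegree_map (algebraMap R K),
    ← minpoly.isIntegrallyClosed_eq_field_fractions' K hx,
    ← PowerBasis.ofAdjoinEqTop_dim (hx.tower_top (A := K)) htop, PowerBasis.finrank]

theorem pow_smul_mem_of_mem_span {ι R M : Type*} [CommSemiring R] [AddCommMonoid M] [Module R M]
    {S : Submodule R M} {v : ι → M} {r : R} {k : ι → ℕ} {K : ℕ} (hv : ∀ i, r ^ k i • v i ∈ S)
    (hk : ∀ i, k i ≤ K) {x : M} (hx : x ∈ span R (range v)) : r ^ K • x ∈ S := by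
  suffices span R (range v) ≤ S.comap (r ^ K • LinearMap.id) from this hx
  rw [span_le]
  rintro _ ⟨i, rfl⟩
  simp only [SetLike.mem_coe, mem_comap, LinearMap.smul_apply, LinearMap.id_apply]
  rw [← Nat.sub_add_cancel (hk i), pow_add, mul_smul]
  exact S.smul_mem _ (hv i)

theorem LinearIndependent.dvd_of_smul_mem_span_smul {ι R M : Type*} [Fintype ι] [CommSemiring R]
    [AddCommMonoid M] [Module R M] {v : ι → M} (hv : LinearIndependent R v) {c : ι → R} {a : R}
    {i : ι} (h : a • v i ∈ span R (range fun m => c m • v m)) : c i ∣ a := by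
  classical
  obtain ⟨d, hd⟩ := (mem_span_range_iff_exists_fun R).mp h
  have := Fintype.linearIndependent_iffₛ.mp hv (fun m => d m * c m) (Pi.single i a)
    (by simpa [mul_smul] using hd)
  exact ⟨d i, by simpa [mul_comm] using (this i).symm⟩

theorem Module.Basis.linearIndependent_coe {ι R L : Type*} [CommRing R] [Ring L]
    [Algebra R L] {S : Subalgebra R L} (B : Module.Basis ι R S) :
    LinearIndependent R fun i => (B i : L) :=
  B.linearIndependent.map' S.val.toLinearMap (LinearMap.ker_eq_bot.mpr Subtype.val_injective)

theorem Module.Basis.coe_mem_span_range_coe {ι R L : Type*} [CommSemiring R] [Semiring L]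
    [Algebra R L] {S : Subalgebra R L} (B : Module.Basis ι R S) (x : S) :
    (x : L) ∈ span R (range fun i => (B i : L)) := by
  have := apply_mem_span_image_of_mem_span S.val.toLinearMap (B.mem_span x)
  rwa [← range_comp] at this

theorem natCast_zpow_mul_eq_pow_smul {R L : Type*} [CommSemiring R] [DivisionRing L]
    [Algebra R L] (q : ℕ) {N : ℤ} (hN : 0 ≤ N) (x : L) :
    (q : L) ^ N * x = (q : R) ^ N.toNat • x := by
  rw [Algebra.smul_def, map_pow, map_natCast, ← zpow_natCast, Int.toNat_of_nonneg hN]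

theorem stmt9_general (p : ℕ) [Fact p.Prime] (L : Type*) [Field L] [Algebra ℚ_[p] L]
    [Algebra ℤ_[p] L] [IsScalarTower ℤ_[p] ℚ_[p] L]
    (n : ℕ) (hn : 0 < n) (hdim : Module.finrank ℚ_[p] L = n)
    (θ : integralClosure ℤ_[p] L) (hθ : Algebra.adjoin ℚ_[p] {(θ : L)} = ⊤)
    (g : ℕ → ℤ_[p][X])
    (hmonic : ∀ m < n, (g m).Monic) (hdeg : ∀ m < n, (g m).natDegree = m)
    (ν : ℕ → ℤ) (hν0 : ν 0 = 0)
    (hνmono : ∀ m m' : ℕ, m ≤ m' → m' < n → ν m ≤ ν m')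
    (B : Module.Basis (Fin n) ℤ_[p] (integralClosure ℤ_[p] L))
    (hB : ∀ m : Fin n,
      (B m : L) = Polynomial.aeval (θ : L) (g (m : ℕ)) / (p : L) ^ (ν (m : ℕ))) :
    IsLeast {N : ℤ | 0 ≤ N ∧ ∀ x : integralClosure ℤ_[p] L,
      (p : L) ^ N * (x : L) ∈ Algebra.adjoin ℤ_[p] {(θ : L)}} (ν (n - 1)) := by
  have hθZ : IsIntegral ℤ_[p] (θ : L) := θ.2
  have : CharZero L := charZero_of_injective_algebraMap (algebraMap ℚ_[p] L).injective
  have hp0 : (p : L) ≠ 0 := Nat.cast_ne_zero.mpr (Fact.out : p.Prime).ne_zero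
  have hνnonneg : ∀ m < n, 0 ≤ ν m := fun m hm => hν0 ▸ hνmono 0 m m.zero_le hm
  have hgB : ∀ m : Fin n, aeval (θ : L) (g m) = (p : ℤ_[p]) ^ (ν m).toNat • (B m : L) := by
    intro m
    rw [← natCast_zpow_mul_eq_pow_smul p (hνnonneg m m.2), hB m,
      mul_div_cancel₀ _ (zpow_ne_zero _ hp0)]
  have hZθ : Subalgebra.toSubmodule (Algebra.adjoin ℤ_[p] {(θ : L)}) ≤
      span ℤ_[p] (range fun m : Fin n => (p : ℤ_[p]) ^ (ν m).toNat • (B m : L)) := by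
    simpa only [hgB] using toSubmodule_adjoin_singleton_le_span_aeval (minpoly.monic hθZ)
      (minpoly.aeval _ _) ((natDegree_minpoly_eq_finrank_of_adjoin_eq_top hθZ hθ).trans hdim)
      hmonic hdeg
  let last : Fin n := ⟨n - 1, by omega⟩
  refine ⟨⟨hνnonneg _ last.2, fun x => ?_⟩, fun N ⟨hN0, hN⟩ => ?_⟩
  · rw [natCast_zpow_mul_eq_pow_smul (R := ℤ_[p]) p (hνnonneg _ last.2),
      ← Subalgebra.mem_toSubmodule]
    refine pow_smul_mem_of_mem_span (k := fun m : Fin n => (ν m).toNat) (fun m => ?_)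
      (fun m => ?_) (B.coe_mem_span_range_coe x)
    · rw [← hgB m]
      exact aeval_mem_adjoin_singleton _ _
    · exact Int.toNat_le_toNat (hνmono _ _ (Nat.le_sub_one_of_lt m.2) last.2)
  · have hmem : (p : ℤ_[p]) ^ N.toNat • (B last : L) ∈ Algebra.adjoin ℤ_[p] {(θ : L)} := by
      rw [← natCast_zpow_mul_eq_pow_smul p hN0]
      exact hN (B last)
    have hdvd := B.linearIndependent_coe.dvd_of_smul_mem_span_smul (hZθ hmem)
    rw [pow_dvd_pow_iff PadicInt.prime_p.ne_zero PadicInt.prime_p.not_isUnit] at hdvd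
    have hlast : ν last = ν (n - 1) := rfl
    omega

/-- if `(g_m(θ)/p^{ν_m})_{0 ≤ m < n}` is a triangular ℤ_p-basis of the ring of
integers `O_L` of `L = ℚ_p(θ)` (with `g_m` monic of degree `m`, `g_0 = 1`, and
`0 = ν_0 ≤ ⋯ ≤ ν_{n−1}`), then `ν_{n−1}` is the least nonnegative integer `N` with
`p^N·O_L ⊆ ℤ_p[θ]`. -/
theorem stmt9 (p : ℕ) [Fact p.Prime] (L : Type*) [Field L] [Algebra ℚ_[p] L]
    [FiniteDimensional ℚ_[p] L] [Algebra ℤ_[p] L] [IsScalarTower ℤ_[p] ℚ_[p] L]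
    (n : ℕ) (hn : 0 < n) (hdim : Module.finrank ℚ_[p] L = n)
    (θ : integralClosure ℤ_[p] L) (hθ : Algebra.adjoin ℚ_[p] {(θ : L)} = ⊤)
    (g : ℕ → ℤ_[p][X]) (hg0 : g 0 = 1)
    (hmonic : ∀ m < n, (g m).Monic) (hdeg : ∀ m < n, (g m).natDegree = m)
    (ν : ℕ → ℤ) (hν0 : ν 0 = 0)
    (hνmono : ∀ m m' : ℕ, m ≤ m' → m' < n → ν m ≤ ν m')
    (B : Module.Basis (Fin n) ℤ_[p] (integralClosure ℤ_[p] L))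
    (hB : ∀ m : Fin n,
      (B m : L) = Polynomial.aeval (θ : L) (g (m : ℕ)) / (p : L) ^ (ν (m : ℕ))) :
    IsLeast {N : ℤ | 0 ≤ N ∧ ∀ x : integralClosure ℤ_[p] L,
      (p : L) ^ N * (x : L) ∈ Algebra.adjoin ℤ_[p] {(θ : L)}} (ν (n - 1)) :=
  stmt9_general p L n hn hdim θ hθ g hmonic hdeg ν hν0 hνmono B hB
end
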